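/- Define A₁(x) = cos(π/4 + arctan(x)/2) and B₁(x) = sin(π/4 + arctan(x)/2) for x ∈ ℝ, and for γ > 0 set A_γ(x) = A₁(γx), B_γ(x) = B₁(γx). Then for all ϵ > 0, g > 1, and γ > 0: (i) lim_{x→−∞}(A_γ(x),B_γ(x)) = (1,0) and lim_{x→+∞}(A_γ(x),B_γ(x)) = (0,1), so (A_γ,B_γ) ∈ X; and (ii) J_{ϵ,g}(A_γ,B_γ) = ∫_ℝ [ (γ³ϵ/2)|A₁''(x)|² + (γ/2)|B₁'(x)|² + (γ^{−1}(g−1)/2)A₁(x)²B₁(x)² ] dx, and this quantity is finite. -/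

import Mathlib

open Filter MeasureTheory
open scoped ENNReal

/-- `P(a,b) = (1/4)(a²+b²−1)² + (1/2)(g−1)a²b²`. -/
noncomputable def Pfun (g a b : ℝ) : ℝ :=
  (1/4) * (a ^ 2 + b ^ 2 - 1) ^ 2 + (1/2) * (g - 1) * a ^ 2 * b ^ 2

/-- The functional `J_{ϵ,g}(A,B) = ∫_ℝ (ϵ/2)A''² + (1/2)B'² + P(A,B) ∈ [0,∞]`. -/
noncomputable def Jfun (ϵ g : ℝ) (A B : ℝ → ℝ) : ℝ≥0∞ :=
  ∫⁻ x : ℝ, ENNReal.ofReal ((ϵ/2) * (iteratedDeriv 2 A x) ^ 2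
    + (1/2) * (deriv B x) ^ 2 + Pfun g (A x) (B x))

/-- `A₁(x) = cos(π/4 + arctan(x)/2)`. -/
noncomputable def A₁fun (x : ℝ) : ℝ := Real.cos (Real.pi/4 + Real.arctan x / 2)

/-- `B₁(x) = sin(π/4 + arctan(x)/2)`. -/
noncomputable def B₁fun (x : ℝ) : ℝ := Real.sin (Real.pi/4 + Real.arctan x / 2)

noncomputable def thfun (x : ℝ) : ℝ := Real.pi/4 + Real.arctan x / 2
noncomputable def A1d (x : ℝ) : ℝ := -Real.sin (thfun x) / (2*(1+x^2))
noncomputable def B1d (x : ℝ) : ℝ := Real.cos (thfun x) / (2*(1+x^2))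
noncomputable def A1dd (x : ℝ) : ℝ :=
  (4*x*Real.sin (thfun x) - Real.cos (thfun x)) / (4*(1+x^2)^2)

lemma one_add_sq_pos (x : ℝ) : (0:ℝ) < 1 + x^2 := by positivity

lemma hasDerivAt_thfun (x : ℝ) : HasDerivAt thfun (1/(1+x^2)/2) x :=
  ((Real.hasDerivAt_arctan x).div_const 2).const_add (Real.pi/4)


lemma hasDerivAt_A1 (x : ℝ) : HasDerivAt A₁fun (A1d x) x := by
  have h := (Real.hasDerivAt_cos (thfun x)).comp x (hasDerivAt_thfun x)
  have he : A1d x = -Real.sin (thfun x) * (1/(1+x^2)/2) := by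
    have h1 : (1:ℝ)+x^2 ≠ 0 := (one_add_sq_pos x).ne'
    rw [A1d]; field_simp
  rw [he]; exact h

lemma hasDerivAt_B1 (x : ℝ) : HasDerivAt B₁fun (B1d x) x := by
  have h := (Real.hasDerivAt_sin (thfun x)).comp x (hasDerivAt_thfun x)
  have he : B1d x = Real.cos (thfun x) * (1/(1+x^2)/2) := by
    have h1 : (1:ℝ)+x^2 ≠ 0 := (one_add_sq_pos x).ne'
    rw [B1d]; field_simp
  rw [he]; exact h

lemma hasDerivAt_A1d (x : ℝ) : HasDerivAt A1d (A1dd x) x := by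
  have hnum : HasDerivAt (fun x => -Real.sin (thfun x))
      (-(Real.cos (thfun x) * (1/(1+x^2)/2))) x :=
    ((Real.hasDerivAt_sin (thfun x)).comp x (hasDerivAt_thfun x)).neg
  have hden : HasDerivAt (fun x : ℝ => 2*(1+x^2)) (2*(2*x)) x := by
    simpa using ((hasDerivAt_pow 2 x).const_add 1).const_mul 2
  have h := hnum.div hden (by positivity)
  convert h using 1
  rotate_left 3
  rw [A1dd]
  have h1 : (1:ℝ)+x^2 ≠ 0 := (one_add_sq_pos x).ne'
  field_simp
  ring
  all_goals rfl

lemma deriv_A1 : deriv A₁fun = A1d := funext fun x => (hasDerivAt_A1 x).deriv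
lemma deriv_B1 : deriv B₁fun = B1d := funext fun x => (hasDerivAt_B1 x).deriv

lemma iter2_A1 (x : ℝ) : iteratedDeriv 2 A₁fun x = A1dd x := by
  rw [show (2:ℕ) = 1+1 from rfl, iteratedDeriv_succ, iteratedDeriv_one, deriv_A1]
  exact (hasDerivAt_A1d x).deriv

lemma hasDerivAt_A1γ (γ x : ℝ) :
    HasDerivAt (fun x => A₁fun (γ * x)) (γ * A1d (γ * x)) x := by
  have h := (hasDerivAt_A1 (γ*x)).comp x ((hasDerivAt_id x).const_mul γ)
  simpa [mul_comm, Function.comp_def] using h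

lemma hasDerivAt_B1γ (γ x : ℝ) :
    HasDerivAt (fun x => B₁fun (γ * x)) (γ * B1d (γ * x)) x := by
  have h := (hasDerivAt_B1 (γ*x)).comp x ((hasDerivAt_id x).const_mul γ)
  simpa [mul_comm, Function.comp_def] using h

lemma iter2_A1γ (γ x : ℝ) :
    iteratedDeriv 2 (fun x => A₁fun (γ * x)) x = γ^2 * A1dd (γ * x) := by
  rw [show (2:ℕ) = 1+1 from rfl, iteratedDeriv_succ, iteratedDeriv_one]
  have hd : deriv (fun x => A₁fun (γ*x)) = fun x => γ * A1d (γ*x) :=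
    funext fun x => (hasDerivAt_A1γ γ x).deriv
  rw [hd]
  have h2 : HasDerivAt (fun x => γ * A1d (γ*x)) (γ * (γ * A1dd (γ*x))) x := by
    have h := ((hasDerivAt_A1d (γ*x)).comp x ((hasDerivAt_id x).const_mul γ)).const_mul γ
    simpa [mul_comm, mul_left_comm, mul_assoc] using h
  rw [h2.deriv]; ring

lemma sq_add_sq_A1B1 (x : ℝ) : A₁fun x ^ 2 + B₁fun x ^ 2 = 1 := by
  rw [A₁fun, B₁fun]; exact Real.cos_sq_add_sin_sq _

lemma A1B1_sq (x : ℝ) : A₁fun x ^ 2 * B₁fun x ^ 2 = 1 / (4 * (1 + x^2)) := by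
  have h2 : 2 * (Real.pi/4 + Real.arctan x / 2) = Real.arctan x + Real.pi/2 := by ring
  have hs : 2 * (A₁fun x * B₁fun x) = Real.cos (Real.arctan x) := by
    have h := Real.sin_two_mul (Real.pi/4 + Real.arctan x / 2)
    rw [h2, Real.sin_add_pi_div_two] at h
    rw [A₁fun, B₁fun]; linarith
  have hc' : Real.cos (Real.arctan x) ^ 2 * (1 + x^2) = 1 := by
    rw [Real.cos_arctan, div_pow, one_pow, Real.sq_sqrt (by positivity)]
    field_simp
  have this2 := congrArg (· ^ 2) hs
  simp only [mul_pow] at this2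
  rw [eq_div_iff (by positivity : (4:ℝ)*(1+x^2) ≠ 0)]
  linear_combination (1+x^2) * this2 + hc'

lemma A1dd_sq_le (x : ℝ) : A1dd x ^ 2 ≤ 2 / (1 + x^2) := by
  have hD : (0:ℝ) < 1 + x^2 := one_add_sq_pos x
  have hD1 : (1:ℝ) ≤ 1 + x^2 := by nlinarith [sq_nonneg x]
  set s := Real.sin (thfun x)
  set c := Real.cos (thfun x)
  have hsc : s^2 + c^2 = 1 := Real.sin_sq_add_cos_sq _
  rw [A1dd, div_pow, div_le_div_iff₀ (by positivity) hD]
  have hN : (4*x*s - c)^2 ≤ 32 * (1 + x^2) := by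
    nlinarith [sq_nonneg (4*x*s + c), mul_nonneg (sq_nonneg x) (by nlinarith [Real.cos_sq_le_one (thfun x)] : (0:ℝ) ≤ 1 - s^2), Real.cos_sq_le_one (thfun x)]
  calc (4*x*s - c)^2 * (1+x^2) ≤ 32 * (1+x^2) * (1+x^2) :=
        mul_le_mul_of_nonneg_right hN hD.le
    _ ≤ 2 * (4*(1+x^2)^2)^2 := by nlinarith [sq_nonneg ((1+x^2)^2 - (1+x^2))]

lemma B1d_sq_le (x : ℝ) : B1d x ^ 2 ≤ 1 / (1 + x^2) := by
  have hD : (0:ℝ) < 1 + x^2 := one_add_sq_pos x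
  have hc : Real.cos (thfun x) ^ 2 ≤ 1 := Real.cos_sq_le_one _
  rw [B1d, div_pow, div_le_div_iff₀ (by positivity) hD]
  nlinarith [sq_nonneg (1+x^2), sq_nonneg ((1+x^2) - 1)]

lemma contDiff_A1 {n : WithTop ℕ∞} : ContDiff ℝ n A₁fun :=
  Real.contDiff_cos.comp (contDiff_const.add (Real.contDiff_arctan.div_const 2))

lemma contDiff_B1 {n : WithTop ℕ∞} : ContDiff ℝ n B₁fun :=
  Real.contDiff_sin.comp (contDiff_const.add (Real.contDiff_arctan.div_const 2))

lemma continuous_thfun : Continuous thfun := by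
  unfold thfun
  exact continuous_const.add (Real.continuous_arctan.div_const 2)

lemma continuous_A1dd : Continuous A1dd := by
  apply Continuous.div
  · exact ((continuous_const.mul continuous_id).mul
      (Real.continuous_sin.comp continuous_thfun)).sub
      (Real.continuous_cos.comp continuous_thfun)
  · fun_prop
  · intro x; positivity

lemma continuous_B1d : Continuous B1d := by
  apply Continuous.div
  · exact Real.continuous_cos.comp continuous_thfun
  · fun_prop
  · intro x; positivity

lemma tendsto_theta_bot {γ : ℝ} (hγ : 0 < γ) :
    Tendsto (fun x => Real.pi/4 + Real.arctan (γ*x)/2) atBot (nhds 0) := by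
  have hm : Tendsto (fun x : ℝ => γ * x) atBot atBot :=
    (tendsto_const_mul_atBot_of_pos hγ).2 tendsto_id
  have ha : Tendsto (fun x => Real.arctan (γ*x)) atBot (nhds (-(Real.pi/2))) :=
    (Real.tendsto_arctan_atBot.mono_right nhdsWithin_le_nhds).comp hm
  have h := tendsto_const_nhds (α := ℝ) (f := atBot) (x := Real.pi/4) |>.add (ha.div_const 2)
  have hv : Real.pi/4 + -(Real.pi/2)/2 = 0 := by ring
  rwa [hv] at h

lemma tendsto_theta_top {γ : ℝ} (hγ : 0 < γ) :
    Tendsto (fun x => Real.pi/4 + Real.arctan (γ*x)/2) atTop (nhds (Real.pi/2)) := by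
  have hm : Tendsto (fun x : ℝ => γ * x) atTop atTop :=
    (tendsto_const_mul_atTop_of_pos hγ).2 tendsto_id
  have ha : Tendsto (fun x => Real.arctan (γ*x)) atTop (nhds (Real.pi/2)) :=
    (Real.tendsto_arctan_atTop.mono_right nhdsWithin_le_nhds).comp hm
  have h := tendsto_const_nhds (α := ℝ) (f := atTop) (x := Real.pi/4) |>.add (ha.div_const 2)
  have hv : Real.pi/4 + (Real.pi/2)/2 = Real.pi/2 := by ring
  rwa [hv] at h

lemma A1dd_sq_le' (x : ℝ) : A1dd x ^ 2 ≤ 2 * (1 + x^2)⁻¹ := by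
  have := A1dd_sq_le x; rwa [div_eq_mul_inv] at this

lemma B1d_sq_le' (x : ℝ) : B1d x ^ 2 ≤ (1 + x^2)⁻¹ := by
  have := B1d_sq_le x; rwa [one_div] at this

lemma A1B1_sq_le (x : ℝ) : A₁fun x ^ 2 * B₁fun x ^ 2 ≤ (1 + x^2)⁻¹ := by
  rw [A1B1_sq, inv_eq_one_div]
  exact one_div_le_one_div_of_le (one_add_sq_pos x) (by nlinarith [one_add_sq_pos x])

theorem integrable_F (ϵ g γ : ℝ) (hϵ : 0 < ϵ) (hg : 1 < g) (hγ : 0 < γ) :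
    Integrable (fun x : ℝ =>
      (γ ^ 3 * ϵ / 2) * (iteratedDeriv 2 A₁fun x) ^ 2
        + (γ / 2) * (deriv B₁fun x) ^ 2
        + (γ⁻¹ * (g - 1) / 2) * (A₁fun x) ^ 2 * (B₁fun x) ^ 2) := by
  set F : ℝ → ℝ := fun x =>
      (γ ^ 3 * ϵ / 2) * (iteratedDeriv 2 A₁fun x) ^ 2
        + (γ / 2) * (deriv B₁fun x) ^ 2
        + (γ⁻¹ * (g - 1) / 2) * (A₁fun x) ^ 2 * (B₁fun x) ^ 2 with hF
  have hFeq : F = fun x =>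
      (γ ^ 3 * ϵ / 2) * (A1dd x) ^ 2 + (γ / 2) * (B1d x) ^ 2
        + (γ⁻¹ * (g - 1) / 2) * (A₁fun x) ^ 2 * (B₁fun x) ^ 2 := by
    funext x; rw [hF]; simp only [iter2_A1, deriv_B1]
  have hg1 : (0:ℝ) ≤ g - 1 := by linarith
  have hk : (0:ℝ) ≤ γ⁻¹ * (g-1) / 2 :=
    div_nonneg (mul_nonneg (inv_nonneg.2 hγ.le) hg1) (by norm_num)
  have hFnn : ∀ x, 0 ≤ F x := by
    intro x
    rw [hF]
    exact add_nonneg (add_nonneg (by positivity) (by positivity))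
      (mul_nonneg (mul_nonneg hk (sq_nonneg _)) (sq_nonneg _))
  have hFle : ∀ x, F x ≤ (γ^3*ϵ + γ + γ⁻¹*(g-1)) * (1 + x^2)⁻¹ := by
    intro x
    rw [hFeq]
    have ht : (0:ℝ) ≤ (1 + x^2)⁻¹ := by positivity
    have h1 := mul_le_mul_of_nonneg_left (A1dd_sq_le' x) (by positivity : (0:ℝ) ≤ γ^3*ϵ/2)
    have h2 := mul_le_mul_of_nonneg_left (B1d_sq_le' x) (by positivity : (0:ℝ) ≤ γ/2)
    have h3 := mul_le_mul_of_nonneg_left (A1B1_sq_le x) hk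
    have h4 : (0:ℝ) ≤ γ * (1+x^2)⁻¹ := by positivity
    have h5 : (0:ℝ) ≤ γ⁻¹*(g-1) * (1+x^2)⁻¹ :=
      mul_nonneg (mul_nonneg (inv_nonneg.2 hγ.le) hg1) ht
    nlinarith [h1, h2, h3, h4, h5]
  have hFc : Continuous F := by
    rw [hFeq]
    exact ((continuous_const.mul (continuous_A1dd.pow 2)).add
      (continuous_const.mul (continuous_B1d.pow 2))).add
      ((continuous_const.mul ((contDiff_A1 (n := 1)).continuous.pow 2)).mul
        ((contDiff_B1 (n := 1)).continuous.pow 2))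
  exact (integrable_inv_one_add_sq.const_mul _).mono' hFc.aestronglyMeasurable
    (ae_of_all _ fun x => by
      rw [Real.norm_eq_abs, abs_of_nonneg (hFnn x)]; exact hFle x)

/-- The test functions `A_γ(x) = A₁(γx)`, `B_γ(x) = B₁(γx)`
belong to `X`, and `J_{ϵ,g}(A_γ,B_γ)` equals the explicit (finite) rescaled
integral `∫ (γ³ϵ/2)A₁''² + (γ/2)B₁'² + (γ⁻¹(g−1)/2)A₁²B₁²`. -/
theorem test_function_energy (ϵ g γ : ℝ) (hϵ : 0 < ϵ) (hg : 1 < g) (hγ : 0 < γ) :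
    Tendsto (fun x => (A₁fun (γ * x), B₁fun (γ * x))) atBot
      (nhds ((1 : ℝ), (0 : ℝ))) ∧
    Tendsto (fun x => (A₁fun (γ * x), B₁fun (γ * x))) atTop
      (nhds ((0 : ℝ), (1 : ℝ))) ∧
    ContDiff ℝ 2 (fun x => A₁fun (γ * x)) ∧ ContDiff ℝ 1 (fun x => B₁fun (γ * x)) ∧
    Integrable (fun x : ℝ =>
      (γ ^ 3 * ϵ / 2) * (iteratedDeriv 2 A₁fun x) ^ 2
        + (γ / 2) * (deriv B₁fun x) ^ 2
        + (γ⁻¹ * (g - 1) / 2) * (A₁fun x) ^ 2 * (B₁fun x) ^ 2) ∧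
    Jfun ϵ g (fun x => A₁fun (γ * x)) (fun x => B₁fun (γ * x))
      = ENNReal.ofReal (∫ x : ℝ,
          ((γ ^ 3 * ϵ / 2) * (iteratedDeriv 2 A₁fun x) ^ 2
            + (γ / 2) * (deriv B₁fun x) ^ 2
            + (γ⁻¹ * (g - 1) / 2) * (A₁fun x) ^ 2 * (B₁fun x) ^ 2)) ∧
    Jfun ϵ g (fun x => A₁fun (γ * x)) (fun x => B₁fun (γ * x)) < ⊤ := by
  have hg1 : (0:ℝ) ≤ g - 1 := by linarith
  set Aγ : ℝ → ℝ := fun x => A₁fun (γ * x) with hAγ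
  set Bγ : ℝ → ℝ := fun x => B₁fun (γ * x) with hBγ
  set F : ℝ → ℝ := fun x =>
      (γ ^ 3 * ϵ / 2) * (iteratedDeriv 2 A₁fun x) ^ 2
        + (γ / 2) * (deriv B₁fun x) ^ 2
        + (γ⁻¹ * (g - 1) / 2) * (A₁fun x) ^ 2 * (B₁fun x) ^ 2 with hF
  have hFint : Integrable F := integrable_F ϵ g γ hϵ hg hγ
  have hFnn : ∀ x, 0 ≤ F x := by
    intro x
    rw [hF]
    have hk : (0:ℝ) ≤ γ⁻¹ * (g-1) / 2 :=
      div_nonneg (mul_nonneg (inv_nonneg.2 hγ.le) hg1) (by norm_num)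
    exact add_nonneg (add_nonneg (by positivity) (by positivity))
      (mul_nonneg (mul_nonneg hk (sq_nonneg _)) (sq_nonneg _))
  -- pointwise identity for the J integrand
  have hptwise : ∀ x : ℝ,
      (ϵ/2) * (iteratedDeriv 2 Aγ x) ^ 2 + (1/2) * (deriv Bγ x) ^ 2
        + Pfun g (Aγ x) (Bγ x) = γ * F (γ * x) := by
    intro x
    rw [hAγ, hBγ, hF]
    rw [iter2_A1γ, (hasDerivAt_B1γ γ x).deriv, Pfun]
    simp only [iter2_A1, deriv_B1, sq_add_sq_A1B1 (γ * x)]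
    field_simp
    ring
  have hJ : Jfun ϵ g Aγ Bγ = ∫⁻ x : ℝ, ENNReal.ofReal (γ * F (γ * x)) := by
    rw [Jfun]
    exact lintegral_congr fun x => by rw [hptwise x]
  have hint2 : Integrable (fun x => γ * F (γ * x)) :=
    (hFint.comp_mul_left' hγ.ne').const_mul γ
  have hnn2 : 0 ≤ᵐ[volume] fun x => γ * F (γ * x) :=
    ae_of_all _ fun x => mul_nonneg hγ.le (hFnn _)
  have hcv : (∫ x : ℝ, γ * F (γ * x)) = ∫ x : ℝ, F x := by
    rw [integral_const_mul, MeasureTheory.Measure.integral_comp_mul_left F γ,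
      smul_eq_mul, abs_of_pos (inv_pos.2 hγ), ← mul_assoc, mul_inv_cancel₀ hγ.ne', one_mul]
  have hJeq : Jfun ϵ g Aγ Bγ = ENNReal.ofReal (∫ x : ℝ, F x) := by
    rw [hJ, ← MeasureTheory.ofReal_integral_eq_lintegral_ofReal hint2 hnn2, hcv]
  refine ⟨?_, ?_, ?_, ?_, hFint, hJeq, hJeq ▸ ENNReal.ofReal_lt_top⟩
  · have hA : Tendsto Aγ atBot (nhds 1) := by
      have := (Real.continuous_cos.tendsto 0).comp (tendsto_theta_bot hγ)
      simpa [hAγ, A₁fun, Function.comp_def] using this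
    have hB : Tendsto Bγ atBot (nhds 0) := by
      have := (Real.continuous_sin.tendsto 0).comp (tendsto_theta_bot hγ)
      simpa [hBγ, B₁fun, Function.comp_def] using this
    exact hA.prodMk_nhds hB
  · have hA : Tendsto Aγ atTop (nhds 0) := by
      have := (Real.continuous_cos.tendsto (Real.pi/2)).comp (tendsto_theta_top hγ)
      simpa [hAγ, A₁fun, Function.comp_def] using this
    have hB : Tendsto Bγ atTop (nhds 1) := by
      have := (Real.continuous_sin.tendsto (Real.pi/2)).comp (tendsto_theta_top hγ)
      simpa [hBγ, B₁fun, Function.comp_def] using this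
    exact hA.prodMk_nhds hB
  · exact contDiff_A1.comp (contDiff_const.mul contDiff_id)
  · exact contDiff_B1.comp (contDiff_const.mul contDiff_id)
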